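/- arXiv:1012.2545 — 3 statements merged into one kernel-verified Lean document; each statement's English description precedes it below -/
import Mathlib

section
/- Shapiro's Catalan convolution identity: For every integer n ≥ 0, Σ_{k=0}^{n} C_{2k} · C_{2n-2k} = 4^n · C_n, where C_m = (1/(m+1))·binom(2m, m) is the m-th Catalan number. -/
/-- The basic Catalan recurrence `(m+2) C_{m+1} = (4m+2) C_m`. -/
lemma catalan_rec (m : ℕ) : (m + 2) * catalan (m + 1) = (4 * m + 2) * catalan m := by
  have h1 : (m + 1 + 1) * catalan (m + 1) = Nat.centralBinom (m + 1) :=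
    succ_mul_catalan_eq_centralBinom (m + 1)
  have h2 : (m + 1) * Nat.centralBinom (m + 1) = 2 * (2 * m + 1) * Nat.centralBinom m :=
    Nat.succ_mul_centralBinom_succ m
  have h3 : (m + 1) * catalan m = Nat.centralBinom m := succ_mul_catalan_eq_centralBinom m
  have key : (m + 1) * ((m + 2) * catalan (m + 1)) = (m + 1) * ((4 * m + 2) * catalan m) := by
    calc (m + 1) * ((m + 2) * catalan (m + 1)) = (m + 1) * Nat.centralBinom (m + 1) := by
          rw [← h1]
      _ = 2 * (2 * m + 1) * Nat.centralBinom m := h2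
      _ = 2 * (2 * m + 1) * ((m + 1) * catalan m) := by rw [h3]
      _ = (m + 1) * ((4 * m + 2) * catalan m) := by ring
  exact Nat.eq_of_mul_eq_mul_left (Nat.succ_pos m) key

/-- Double-step Catalan recurrence at even indices, rational form. -/
lemma catalan_rec2 (m : ℕ) :
    (2 * (m : ℚ) + 2) * (2 * m + 3) * catalan (2 * m + 2)
      = (8 * m + 2) * (8 * m + 6) * catalan (2 * m) := by
  have h1 := catalan_rec (2 * m)
  have h2 := catalan_rec (2 * m + 1)
  rw [show 2 * m + 1 + 1 = 2 * m + 2 by omega] at h2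
  have q1 : (2 * (m : ℚ) + 2) * catalan (2 * m + 1) = (8 * m + 2) * catalan (2 * m) := by
    have := congrArg (fun x : ℕ => (x : ℚ)) h1
    push_cast at this
    linear_combination this
  have q2 : (2 * (m : ℚ) + 3) * catalan (2 * m + 2) = (8 * m + 6) * catalan (2 * m + 1) := by
    have := congrArg (fun x : ℕ => (x : ℚ)) h2
    push_cast at this
    linear_combination this
  linear_combination (2 * (m : ℚ) + 2) * q2 + (8 * (m : ℚ) + 6) * q1

/-- Pointwise telescoping certificate for Shapiro's identity. -/
lemma shapiro_key (k j : ℕ) :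
    ((k : ℚ) + j + 1) * (2 * ((k : ℚ) + j) + 3) *
        ((16 * ((k : ℚ) + j) + 8) * ((catalan (2 * k) : ℚ) * catalan (2 * j))
          - (((k : ℚ) + j) + 2) * ((catalan (2 * k) : ℚ) * catalan (2 * j + 2)))
      = ((k : ℚ) + 1) * (2 * k + 3) * (3 * j + k + 2) *
            ((catalan (2 * k + 2) : ℚ) * catalan (2 * j))
        - (k : ℚ) * (2 * k + 1) * (3 * j + k + 4) *
            ((catalan (2 * k) : ℚ) * catalan (2 * j + 2)) := by
  have hk := catalan_rec2 k
  have hj := catalan_rec2 j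
  have hknz : (2 * (k : ℚ) + 2) * (2 * k + 3) ≠ 0 := by positivity
  have hjnz : (2 * (j : ℚ) + 2) * (2 * j + 3) ≠ 0 := by positivity
  have hck : (catalan (2 * k + 2) : ℚ)
      = (8 * k + 2) * (8 * k + 6) * catalan (2 * k) / ((2 * k + 2) * (2 * k + 3)) := by
    rw [eq_div_iff hknz]; linear_combination hk
  have hcj : (catalan (2 * j + 2) : ℚ)
      = (8 * j + 2) * (8 * j + 6) * catalan (2 * j) / ((2 * j + 2) * (2 * j + 3)) := by
    rw [eq_div_iff hjnz]; linear_combination hj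
  rw [hck, hcj]
  field_simp
  ring

lemma shapiro_rat (n : ℕ) :
    ∑ k ∈ Finset.range (n + 1), (catalan (2 * k) : ℚ) * catalan (2 * n - 2 * k) =
      4 ^ n * catalan n := by
  induction n with
  | zero => simp
  | succ n ih =>
    set g : ℕ → ℚ := fun k =>
      (k : ℚ) * (2 * k + 1) * ((3 * (n : ℚ) + 4) - 2 * k) *
        catalan (2 * k) * catalan (2 * (n + 1) - 2 * k) with hg
    have tel : ∑ k ∈ Finset.range (n + 1), (g (k + 1) - g k) = g (n + 1) - g 0 :=
      Finset.sum_range_sub g (n + 1)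
    have step : ∀ k ∈ Finset.range (n + 1),
        g (k + 1) - g k =
          (((n : ℚ) + 1) * (2 * n + 3) * (16 * (n : ℚ) + 8)) *
              ((catalan (2 * k) : ℚ) * catalan (2 * n - 2 * k))
            - (((n : ℚ) + 1) * (2 * n + 3) * ((n : ℚ) + 2)) *
              ((catalan (2 * k) : ℚ) * catalan (2 * (n + 1) - 2 * k)) := by
      intro k hk
      have hkn : k ≤ n := by
        have := Finset.mem_range.mp hk; omega
      obtain ⟨j, hj⟩ : ∃ j, n = k + j := ⟨n - k, by omega⟩
      subst hj
      have i1 : 2 * (k + j) - 2 * k = 2 * j := by omega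
      have i2 : 2 * (k + j + 1) - 2 * k = 2 * j + 2 := by omega
      have i3 : 2 * (k + j + 1) - 2 * (k + 1) = 2 * j := by omega
      have i4 : 2 * (k + 1) = 2 * k + 2 := by omega
      have i5 : 2 * (k + j + 1) - (2 * k + 2) = 2 * j := by omega
      simp only [hg, i1, i2, i3, i4, i5]
      push_cast
      linear_combination -(shapiro_key k j)
    have h4 : ∑ k ∈ Finset.range (n + 1),
          ((((n : ℚ) + 1) * (2 * n + 3) * (16 * (n : ℚ) + 8)) *
              ((catalan (2 * k) : ℚ) * catalan (2 * n - 2 * k))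
            - (((n : ℚ) + 1) * (2 * n + 3) * ((n : ℚ) + 2)) *
              ((catalan (2 * k) : ℚ) * catalan (2 * (n + 1) - 2 * k)))
        = g (n + 1) - g 0 := (Finset.sum_congr rfl step).symm.trans tel
    have hg0 : g 0 = 0 := by simp [hg]
    have hgn : g (n + 1)
        = ((n : ℚ) + 1) * (2 * n + 3) * ((n : ℚ) + 2) * catalan (2 * (n + 1)) := by
      simp only [hg]
      rw [show 2 * (n + 1) - 2 * (n + 1) = 0 by omega]
      rw [catalan_zero]
      push_cast
      ring
    rw [hg0, hgn, sub_zero] at h4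
    rw [Finset.sum_sub_distrib, ← Finset.mul_sum, ← Finset.mul_sum] at h4
    have hsplit : ∑ k ∈ Finset.range (n + 1 + 1),
          (catalan (2 * k) : ℚ) * catalan (2 * (n + 1) - 2 * k)
        = (∑ k ∈ Finset.range (n + 1),
            (catalan (2 * k) : ℚ) * catalan (2 * (n + 1) - 2 * k))
          + catalan (2 * (n + 1)) := by
      rw [Finset.sum_range_succ]
      rw [show 2 * (n + 1) - 2 * (n + 1) = 0 by omega, catalan_zero]
      push_cast
      ring
    have hrecn : ((n : ℚ) + 2) * catalan (n + 1) = (4 * n + 2) * catalan n := by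
      have := congrArg (fun x : ℕ => (x : ℚ)) (catalan_rec n)
      push_cast at this
      linear_combination this
    have hnz : ((n : ℚ) + 1) * (2 * n + 3) * ((n : ℚ) + 2) ≠ 0 := by positivity
    apply mul_left_cancel₀ hnz
    rw [hsplit]
    linear_combination (-1 : ℚ) * h4 + ((n : ℚ) + 1) * (2 * n + 3) * (16 * n + 8) * ih
      - ((n : ℚ) + 1) * (2 * n + 3) * 4 ^ (n + 1) * hrecn

/-- Shapiro's Catalan convolution identity:
`∑_{k=0}^{n} C_{2k} C_{2n-2k} = 4^n C_n`. -/
theorem shapiro_catalan_convolution (n : ℕ) :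
    ∑ k ∈ Finset.range (n + 1), catalan (2 * k) * catalan (2 * n - 2 * k) =
      4 ^ n * catalan n := by
  have hq := shapiro_rat n
  have : ((∑ k ∈ Finset.range (n + 1), catalan (2 * k) * catalan (2 * n - 2 * k) : ℕ) : ℚ)
      = ((4 ^ n * catalan n : ℕ) : ℚ) := by
    push_cast
    exact hq
  exact_mod_cast this
end

section
/- Three-term contiguous relation (equation (3.3) of the paper): For every integer n ≥ 0 and complex q, a, b with q ≠ 0, a ≠ 0, b ≠ 0 such that all factors appearing in denominators below are nonzero (in particular 1 − abq^{2n−1} ≠ 0 and 1 − q^{1-2n}/(ab) ≠ 0), one has Σ_{k=0}^{n} (q^{-2n};q²)_k (a;q²)_k (b;q²)_k (q^{3-2n}/(ab);q²)_k q^{2k} / ((q²;q²)_k (q^{2-2n}/a;q²)_k (q^{4-2n}/b;q²)_k (abq;q²)_k) = [bq^{2n−2}(1−aq)/(1−abq^{2n−1})] · Σ_{k=0}^{n} (q^{-2n};q²)_k (a;q²)_k (b;q²)_k (q^{1-2n}/(ab);q²)_k q^{2k} / ((q²;q²)_k (q^{2-2n}/a;q²)_k (q^{4-2n}/b;q²)_k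 (abq;q²)_k) + [(1−bq^{2n−2})/(1−abq^{2n−1})] · Σ_{k=0}^{n} (q^{-2n};q²)_k (a;q²)_k (b;q²)_k (q^{1-2n}/(ab);q²)_k q^{2k} / ((q²;q²)_k (q^{2-2n}/a;q²)_k (q^{2-2n}/b;q²)_k (abq;q²)_k). -/
/-!
The relation holds term by term. Put `u = q^(1-2n)`. The `k`-th terms of the three sums differ
only in the factors `(u q²/(ab); q²)_k` versus `(u/(ab); q²)_k` and `(q³u/b; q²)_k` versus
`(qu/b; q²)_k`, and the one-step shift `(1 - x)(xQ; Q)_k = (x; Q)_k (1 - x Q^k)` expresses these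
ratios as `(ab - u q^(2k))/(ab - u)` and `(b - qu q^(2k))/(b - qu)`. In terms of them the termwise
relation is a linear identity.
-/

/-- The q-shifted factorial `(a; q)ₙ = ∏_{i=0}^{n-1} (1 - a qⁱ)`. -/
noncomputable def qPoch (a q : ℂ) (n : ℕ) : ℂ := ∏ i ∈ Finset.range n, (1 - a * q ^ i)

theorem qPoch_mul_base (a q : ℂ) (k : ℕ) :
    (1 - a) * qPoch (a * q) q k = qPoch a q k * (1 - a * q ^ k) := by
  rw [qPoch, qPoch, ← Finset.prod_range_succ, Finset.prod_range_succ', pow_zero, mul_one, mul_comm]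
  simp only [pow_succ', mul_assoc]

theorem qPoch_mul_base_div (p s q : ℂ) (hs : s ≠ 0) (k : ℕ) :
    (s - p) * qPoch (p * q / s) q k = qPoch (p / s) q k * (s - p * q ^ k) := by
  have h := qPoch_mul_base (p / s) q k
  rw [div_mul_eq_mul_div] at h
  field_simp at h ⊢
  exact h

theorem mul_div_eq_of_ratio_eq {K : Type*} [Field K] {N X P P' C C' D D' β γ : K}
    (h : C' / D' = β * (C / D') + γ * (C / D)) :
    N * C' * X / (P * D' * P') = β * (N * C * X / (P * D' * P')) + γ * (N * C * X / (P * D * P')) := by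
  linear_combination N * X / (P * P') * h

theorem qPoch_ratio_contiguous (q u a b : ℂ) (k : ℕ) (hq : q ≠ 0) (hu : u ≠ 0) (ha : a ≠ 0)
    (hb : b ≠ 0) (hD : qPoch (q * u / b) (q ^ 2) k ≠ 0)
    (hD' : qPoch (q * u * q ^ 2 / b) (q ^ 2) k ≠ 0) (hab : 1 - a * b * u⁻¹ ≠ 0) :
    qPoch (u * q ^ 2 / (a * b)) (q ^ 2) k / qPoch (q * u * q ^ 2 / b) (q ^ 2) k =
      b * (q * u)⁻¹ * (1 - a * q) / (1 - a * b * u⁻¹) *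
          (qPoch (u / (a * b)) (q ^ 2) k / qPoch (q * u * q ^ 2 / b) (q ^ 2) k) +
        (1 - b * (q * u)⁻¹) / (1 - a * b * u⁻¹) *
          (qPoch (u / (a * b)) (q ^ 2) k / qPoch (q * u / b) (q ^ 2) k) := by
  have hC_shift := qPoch_mul_base_div u (a * b) (q ^ 2) (mul_ne_zero ha hb) k
  have hD_shift := qPoch_mul_base_div (q * u) b (q ^ 2) hb k
  generalize qPoch (u * q ^ 2 / (a * b)) (q ^ 2) k = C' at *
  generalize qPoch (u / (a * b)) (q ^ 2) k = C at *
  generalize qPoch (q * u * q ^ 2 / b) (q ^ 2) k = D' at *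
  generalize qPoch (q * u / b) (q ^ 2) k = D at *
  have hu_sub : u - b * a ≠ 0 := by
    contrapose! hab
    field_simp
    linear_combination hab
  field_simp
  linear_combination (-q * D) * hC_shift + C * hD_shift

theorem andrews_three_term_relation_general (n : ℕ) (q a b : ℂ)
    (hq : q ≠ 0) (ha : a ≠ 0) (hb : b ≠ 0)
    (h3 : ∀ k ≤ n, qPoch (q ^ (2 - 2 * (n : ℤ)) / b) (q ^ 2) k ≠ 0)
    (h4 : ∀ k ≤ n, qPoch (q ^ (4 - 2 * (n : ℤ)) / b) (q ^ 2) k ≠ 0)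
    (h6 : 1 - a * b * q ^ (2 * (n : ℤ) - 1) ≠ 0) :
    ∑ k ∈ Finset.range (n + 1),
      qPoch (q ^ (-2 * (n : ℤ))) (q ^ 2) k * qPoch a (q ^ 2) k * qPoch b (q ^ 2) k *
          qPoch (q ^ (3 - 2 * (n : ℤ)) / (a * b)) (q ^ 2) k * q ^ (2 * k) /
        (qPoch (q ^ 2) (q ^ 2) k * qPoch (q ^ (2 - 2 * (n : ℤ)) / a) (q ^ 2) k *
          qPoch (q ^ (4 - 2 * (n : ℤ)) / b) (q ^ 2) k * qPoch (a * b * q) (q ^ 2) k) =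
      b * q ^ (2 * (n : ℤ) - 2) * (1 - a * q) / (1 - a * b * q ^ (2 * (n : ℤ) - 1)) *
        ∑ k ∈ Finset.range (n + 1),
          qPoch (q ^ (-2 * (n : ℤ))) (q ^ 2) k * qPoch a (q ^ 2) k * qPoch b (q ^ 2) k *
              qPoch (q ^ (1 - 2 * (n : ℤ)) / (a * b)) (q ^ 2) k * q ^ (2 * k) /
            (qPoch (q ^ 2) (q ^ 2) k * qPoch (q ^ (2 - 2 * (n : ℤ)) / a) (q ^ 2) k *
              qPoch (q ^ (4 - 2 * (n : ℤ)) / b) (q ^ 2) k * qPoch (a * b * q) (q ^ 2) k) +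
      (1 - b * q ^ (2 * (n : ℤ) - 2)) / (1 - a * b * q ^ (2 * (n : ℤ) - 1)) *
        ∑ k ∈ Finset.range (n + 1),
          qPoch (q ^ (-2 * (n : ℤ))) (q ^ 2) k * qPoch a (q ^ 2) k * qPoch b (q ^ 2) k *
              qPoch (q ^ (1 - 2 * (n : ℤ)) / (a * b)) (q ^ 2) k * q ^ (2 * k) /
            (qPoch (q ^ 2) (q ^ 2) k * qPoch (q ^ (2 - 2 * (n : ℤ)) / a) (q ^ 2) k *
              qPoch (q ^ (2 - 2 * (n : ℤ)) / b) (q ^ 2) k * qPoch (a * b * q) (q ^ 2) k) := by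
  set u := q ^ (1 - 2 * (n : ℤ)) with hu
  have hzpow (m : ℤ) : q ^ (m - 2 * (n : ℤ)) = q ^ (m - 1) * u := by
    rw [hu, ← zpow_add₀ hq]; ring_nf
  have e2 : q ^ (2 - 2 * (n : ℤ)) = q * u := by simpa using hzpow 2
  have e3 : q ^ (3 - 2 * (n : ℤ)) = u * q ^ 2 := by
    rw [hzpow, mul_comm]; norm_num
  have e4 : q ^ (4 - 2 * (n : ℤ)) = q * u * q ^ 2 := by
    rw [hzpow]; norm_num; ring
  have e5 : q ^ (2 * (n : ℤ) - 1) = u⁻¹ := by rw [hu, ← zpow_neg]; ring_nf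
  have e6 : q ^ (2 * (n : ℤ) - 2) = (q * u)⁻¹ := by rw [← e2, ← zpow_neg]; ring_nf
  rw [e2] at h3 ⊢
  rw [e4] at h4 ⊢
  rw [e5] at h6 ⊢
  rw [e3, e6, Finset.mul_sum, Finset.mul_sum, ← Finset.sum_add_distrib]
  refine Finset.sum_congr rfl fun k hk => mul_div_eq_of_ratio_eq ?_
  have hk : k ≤ n := Finset.mem_range_succ_iff.mp hk
  exact qPoch_ratio_contiguous q u a b k hq (zpow_ne_zero _ hq) ha hb (h3 k hk) (h4 k hk) h6

/-- The three-term contiguous relation (3.3) of the paper. -/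
theorem andrews_three_term_relation (n : ℕ) (q a b : ℂ)
    (hq : q ≠ 0) (ha : a ≠ 0) (hb : b ≠ 0)
    (h1 : ∀ k ≤ n, qPoch (q ^ 2) (q ^ 2) k ≠ 0)
    (h2 : ∀ k ≤ n, qPoch (q ^ (2 - 2 * (n : ℤ)) / a) (q ^ 2) k ≠ 0)
    (h3 : ∀ k ≤ n, qPoch (q ^ (2 - 2 * (n : ℤ)) / b) (q ^ 2) k ≠ 0)
    (h4 : ∀ k ≤ n, qPoch (q ^ (4 - 2 * (n : ℤ)) / b) (q ^ 2) k ≠ 0)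
    (h5 : ∀ k ≤ n, qPoch (a * b * q) (q ^ 2) k ≠ 0)
    (h6 : 1 - a * b * q ^ (2 * (n : ℤ) - 1) ≠ 0)
    (h7 : 1 - q ^ (1 - 2 * (n : ℤ)) / (a * b) ≠ 0) :
    ∑ k ∈ Finset.range (n + 1),
      qPoch (q ^ (-2 * (n : ℤ))) (q ^ 2) k * qPoch a (q ^ 2) k * qPoch b (q ^ 2) k *
          qPoch (q ^ (3 - 2 * (n : ℤ)) / (a * b)) (q ^ 2) k * q ^ (2 * k) /
        (qPoch (q ^ 2) (q ^ 2) k * qPoch (q ^ (2 - 2 * (n : ℤ)) / a) (q ^ 2) k *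
          qPoch (q ^ (4 - 2 * (n : ℤ)) / b) (q ^ 2) k * qPoch (a * b * q) (q ^ 2) k) =
      b * q ^ (2 * (n : ℤ) - 2) * (1 - a * q) / (1 - a * b * q ^ (2 * (n : ℤ) - 1)) *
        ∑ k ∈ Finset.range (n + 1),
          qPoch (q ^ (-2 * (n : ℤ))) (q ^ 2) k * qPoch a (q ^ 2) k * qPoch b (q ^ 2) k *
              qPoch (q ^ (1 - 2 * (n : ℤ)) / (a * b)) (q ^ 2) k * q ^ (2 * k) /
            (qPoch (q ^ 2) (q ^ 2) k * qPoch (q ^ (2 - 2 * (n : ℤ)) / a) (q ^ 2) k *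
              qPoch (q ^ (4 - 2 * (n : ℤ)) / b) (q ^ 2) k * qPoch (a * b * q) (q ^ 2) k) +
      (1 - b * q ^ (2 * (n : ℤ) - 2)) / (1 - a * b * q ^ (2 * (n : ℤ) - 1)) *
        ∑ k ∈ Finset.range (n + 1),
          qPoch (q ^ (-2 * (n : ℤ))) (q ^ 2) k * qPoch a (q ^ 2) k * qPoch b (q ^ 2) k *
              qPoch (q ^ (1 - 2 * (n : ℤ)) / (a * b)) (q ^ 2) k * q ^ (2 * k) /
            (qPoch (q ^ 2) (q ^ 2) k * qPoch (q ^ (2 - 2 * (n : ℤ)) / a) (q ^ 2) k *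
              qPoch (q ^ (2 - 2 * (n : ℤ)) / b) (q ^ 2) k * qPoch (a * b * q) (q ^ 2) k) :=
  andrews_three_term_relation_general n q a b hq ha hb h3 h4 h6
end

section
/- Termwise contiguous relation used in the proof of equation (3.4): Let G_k(n,a,b,q) = (q^{-2n};q²)_k (a;q²)_k (b;q²)_k (q^{1-2n}/(ab);q²)_k q^{2k} / ((q²;q²)_k (q^{2-2n}/a;q²)_k (q^{4-2n}/b;q²)_k (abq;q²)_k). For integers n ≥ 2 and 1 ≤ k ≤ n, and complex q, a, b with q ≠ 0, a ≠ 0, b ≠ 0 such that all factors appearing in denominators are nonzero, one has G_k(n,a,b,q) − G_k(n,a/q²,b,q) = β_n · G_{k−1}(n−2, a, bq², q), where β_n = (a/q² − q^{1-2n}/(ab)) (1−b)(1−bq)(1−q^{-2n})(1−q^{-2n+2}) q² / ((1−ab/q)(1−abq)(1−q^{2-2n}/a)(1−q^{4-2n}/a)(1−q^{4-2n}/b)). -/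
/-- The denominator of the summand `G_k(n,a,b,q)`:
`(q²;q²)_k (q^{2−2n}/a;q²)_k (q^{4−2n}/b;q²)_k (abq;q²)_k`. -/
noncomputable def GDen (n : ℕ) (a b q : ℂ) (k : ℕ) : ℂ :=
  qPoch (q ^ 2) (q ^ 2) k * qPoch (q ^ (2 - 2 * (n : ℤ)) / a) (q ^ 2) k *
    qPoch (q ^ (4 - 2 * (n : ℤ)) / b) (q ^ 2) k * qPoch (a * b * q) (q ^ 2) k

/-- The summand
`G_k(n,a,b,q) = (q^{−2n};q²)_k (a;q²)_k (b;q²)_k (q^{1−2n}/(ab);q²)_k q^{2k}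
  / ((q²;q²)_k (q^{2−2n}/a;q²)_k (q^{4−2n}/b;q²)_k (abq;q²)_k)`. -/
noncomputable def Gterm (n : ℕ) (a b q : ℂ) (k : ℕ) : ℂ :=
  qPoch (q ^ (-2 * (n : ℤ))) (q ^ 2) k * qPoch a (q ^ 2) k * qPoch b (q ^ 2) k *
      qPoch (q ^ (1 - 2 * (n : ℤ)) / (a * b)) (q ^ 2) k * q ^ (2 * k) /
    GDen n a b q k


/-!
Put `w = q^{-2n}` and `P = q^{2(k-1)}`. Splitting off the first or the last factor of each
`q`-shifted factorial of length `k`, and absorbing the factors of `βₙ` into the `q`-shifted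
factorials of `G_{k-1}(n-2, a, bq², q)`, writes all three terms as one common factor times a
rational function of `q, a, b, w, P`. The relation then reduces to a single identity between these
three rational functions, which is checked by clearing denominators.
-/
lemma qPoch_succ (x q : ℂ) (m : ℕ) : qPoch x q (m + 1) = qPoch x q m * (1 - x * q ^ m) :=
  Finset.prod_range_succ _ m

lemma qPoch_succ' (x q : ℂ) (m : ℕ) : qPoch x q (m + 1) = (1 - x) * qPoch (x * q) q m := by
  rw [qPoch, qPoch, Finset.prod_range_succ', pow_zero, mul_one, mul_comm]
  simp only [pow_succ', mul_assoc]

lemma one_sub_ne_zero_of_qPoch_succ_ne_zero {x q : ℂ} {m : ℕ} (h : qPoch x q (m + 1) ≠ 0) :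
    1 - x ≠ 0 := by
  rw [qPoch_succ'] at h
  exact left_ne_zero_of_mul h

lemma one_sub_mul_pow_ne_zero_of_qPoch_succ_ne_zero {x q : ℂ} {m : ℕ}
    (h : qPoch x q (m + 1) ≠ 0) : 1 - x * q ^ m ≠ 0 := by
  rw [qPoch_succ] at h
  exact right_ne_zero_of_mul h

-- `GDen n` and `Gterm n` with `q^{-2n}` replaced by a free parameter `w`.
noncomputable def GwDen (w a b q : ℂ) (k : ℕ) : ℂ :=
  qPoch (q ^ 2) (q ^ 2) k * qPoch (q ^ 2 * w / a) (q ^ 2) k * qPoch (q ^ 4 * w / b) (q ^ 2) k *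
    qPoch (a * b * q) (q ^ 2) k

noncomputable def Gw (w a b q : ℂ) (k : ℕ) : ℂ :=
  qPoch w (q ^ 2) k * qPoch a (q ^ 2) k * qPoch b (q ^ 2) k * qPoch (q * w / (a * b)) (q ^ 2) k *
      (q ^ 2) ^ k / GwDen w a b q k

lemma zpow_sub_two_mul_natCast {q : ℂ} (hq : q ≠ 0) (c : ℤ) (n : ℕ) :
    q ^ (c - 2 * (n : ℤ)) = q ^ c * q ^ (-2 * (n : ℤ)) := by
  rw [← zpow_add₀ hq]; ring_nf

lemma GDen_eq_GwDen (n : ℕ) (a b q : ℂ) (k : ℕ) (hq : q ≠ 0) :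
    GDen n a b q k = GwDen (q ^ (-2 * (n : ℤ))) a b q k := by
  simp only [GDen, GwDen, zpow_sub_two_mul_natCast hq, zpow_ofNat]

lemma Gterm_eq_Gw (n : ℕ) (a b q : ℂ) (k : ℕ) (hq : q ≠ 0) :
    Gterm n a b q k = Gw (q ^ (-2 * (n : ℤ))) a b q k := by
  rw [Gterm, Gw, GDen_eq_GwDen n a b q k hq, zpow_sub_two_mul_natCast hq, zpow_one, pow_mul]

noncomputable def GwCommon (w a b q : ℂ) (k : ℕ) : ℂ :=
  qPoch w (q ^ 2) (k + 1) * qPoch a (q ^ 2) k * qPoch b (q ^ 2) (k + 1) *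
      qPoch (q * w / (a * b) * q ^ 2) (q ^ 2) k * (q ^ 2) ^ (k + 1) /
    (qPoch (q ^ 2) (q ^ 2) k * qPoch (q ^ 4 * w / a) (q ^ 2) k *
      qPoch (q ^ 4 * w / b) (q ^ 2) (k + 1) * qPoch (a * b * q) (q ^ 2) k)

lemma Gw_succ_eq_GwCommon_mul (w a b q : ℂ) (k : ℕ) :
    Gw w a b q (k + 1) = GwCommon w a b q k * ((1 - a * (q ^ 2) ^ k) * (1 - q * w / (a * b)) /
      ((1 - q ^ 2 * (q ^ 2) ^ k) * (1 - q ^ 2 * w / a) * (1 - a * b * q * (q ^ 2) ^ k))) := by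
  rw [GwCommon, Gw, GwDen, qPoch_succ a, qPoch_succ' (q * w / (a * b)), qPoch_succ (q ^ 2),
    qPoch_succ' (q ^ 2 * w / a), qPoch_succ (a * b * q),
    show q ^ 2 * w / a * q ^ 2 = q ^ 4 * w / a by ring, div_mul_div_comm]
  congr 1 <;> ring

lemma Gw_div_sq_succ_eq_GwCommon_mul {q : ℂ} (w a b : ℂ) (k : ℕ) (hq : q ≠ 0) :
    Gw w (a / q ^ 2) b q (k + 1) = GwCommon w a b q k * ((1 - a / q ^ 2) *
      (1 - q * w / (a * b) * q ^ 2 * (q ^ 2) ^ k) /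
      ((1 - q ^ 2 * (q ^ 2) ^ k) * (1 - q ^ 4 * w / a * (q ^ 2) ^ k) * (1 - a * b / q))) := by
  rw [GwCommon, Gw, GwDen, show q ^ 2 * w / (a / q ^ 2) = q ^ 4 * w / a by field_simp,
    show a / q ^ 2 * b * q = a * b / q by field_simp,
    show q * w / (a / q ^ 2 * b) = q * w / (a * b) * q ^ 2 by field_simp,
    qPoch_succ' (a / q ^ 2), qPoch_succ (q * w / (a * b) * q ^ 2), qPoch_succ (q ^ 2),
    qPoch_succ (q ^ 4 * w / a), qPoch_succ' (a * b / q), div_mul_cancel₀ a (pow_ne_zero 2 hq),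
    show a * b / q * q ^ 2 = a * b * q by field_simp, div_mul_div_comm]
  congr 1 <;> ring

-- The factors `1 - w`, `1 - q²w`, `1 - b`, `1 - q⁴w/a`, `1 - q⁴w/b`, `1 - abq` of the
-- coefficient extend the `q`-shifted factorials of `Gw (q⁴w) a (bq²) q k` by one or two factors.
lemma coeff_mul_Gw_eq_GwCommon_mul {q : ℂ} (w a b : ℂ) (k : ℕ) (hq : q ≠ 0) :
    (a / q ^ 2 - q * w / (a * b)) * (1 - b) * (1 - b * q) * (1 - w) * (1 - q ^ 2 * w) * q ^ 2 /
          ((1 - a * b / q) * (1 - a * b * q) * (1 - q ^ 2 * w / a) * (1 - q ^ 4 * w / a) *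
            (1 - q ^ 4 * w / b)) * Gw (q ^ 4 * w) a (b * q ^ 2) q k =
      GwCommon w a b q k * ((a / q ^ 2 - q * w / (a * b)) * (1 - b * q) *
        (1 - q ^ 2 * w * (q ^ 2) ^ k) / ((1 - a * b / q) * (1 - q ^ 2 * w / a) *
          (1 - q ^ 4 * w / a * (q ^ 2) ^ k) * (1 - a * b * q * (q ^ 2) ^ k))) := by
  calc _ = (a / q ^ 2 - q * w / (a * b)) * (1 - b * q) * q ^ 2 * qPoch w (q ^ 2) (k + 1 + 1) *
          qPoch a (q ^ 2) k * qPoch b (q ^ 2) (k + 1) *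
          qPoch (q * w / (a * b) * q ^ 2) (q ^ 2) k * (q ^ 2) ^ k /
        ((1 - a * b / q) * (1 - q ^ 2 * w / a) * qPoch (q ^ 2) (q ^ 2) k *
          qPoch (q ^ 4 * w / a) (q ^ 2) (k + 1) * qPoch (q ^ 4 * w / b) (q ^ 2) (k + 1) *
          qPoch (a * b * q) (q ^ 2) (k + 1)) := by
        rw [Gw, GwDen,
          show q * (q ^ 4 * w) / (a * (b * q ^ 2)) = q * w / (a * b) * q ^ 2 by field_simp,
          show q ^ 2 * (q ^ 4 * w) / a = q ^ 4 * w / a * q ^ 2 by ring,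
          show q ^ 4 * (q ^ 4 * w) / (b * q ^ 2) = q ^ 4 * w / b * q ^ 2 by field_simp,
          show a * (b * q ^ 2) * q = a * b * q * q ^ 2 by ring,
          qPoch_succ' w _ (k + 1), qPoch_succ' (w * q ^ 2),
          show w * q ^ 2 * q ^ 2 = q ^ 4 * w by ring,
          qPoch_succ' b, qPoch_succ' (q ^ 4 * w / a), qPoch_succ' (q ^ 4 * w / b),
          qPoch_succ' (a * b * q), div_mul_div_comm]
        congr 1 <;> ring
    _ = _ := by
        rw [GwCommon, qPoch_succ w _ (k + 1), qPoch_succ (q ^ 4 * w / a),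
          qPoch_succ (a * b * q), div_mul_div_comm]
        congr 1 <;> ring

-- The three terms of `Gw_sub_Gw_div_sq` divided by `GwCommon`, with `P = q^{2k}`.
lemma contiguity_scalar_identity {q a b w P : ℂ} (hq : q ≠ 0) (ha : a ≠ 0) (hb : b ≠ 0)
    (h1 : 1 - q ^ 2 * P ≠ 0) (h2 : 1 - q ^ 2 * w / a ≠ 0) (h3 : 1 - a * b * q * P ≠ 0)
    (h4 : 1 - q ^ 4 * w / a * P ≠ 0) (h5 : 1 - a * b / q ≠ 0) :
    (1 - a * P) * (1 - q * w / (a * b)) /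
        ((1 - q ^ 2 * P) * (1 - q ^ 2 * w / a) * (1 - a * b * q * P)) -
      (1 - a / q ^ 2) * (1 - q * w / (a * b) * q ^ 2 * P) /
        ((1 - q ^ 2 * P) * (1 - q ^ 4 * w / a * P) * (1 - a * b / q)) =
    (a / q ^ 2 - q * w / (a * b)) * (1 - b * q) * (1 - q ^ 2 * w * P) /
      ((1 - a * b / q) * (1 - q ^ 2 * w / a) * (1 - q ^ 4 * w / a * P) * (1 - a * b * q * P)) := by
  rw [div_sub_div _ _ (by positivity) (by positivity),
    div_eq_div_iff (by positivity) (by positivity)]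
  field_simp
  ring

lemma Gw_sub_Gw_div_sq {w a b q : ℂ} (k : ℕ) (hq : q ≠ 0) (ha : a ≠ 0) (hb : b ≠ 0)
    (hden : GwDen w a b q (k + 1) ≠ 0) (hden' : GwDen w (a / q ^ 2) b q (k + 1) ≠ 0) :
    Gw w a b q (k + 1) - Gw w (a / q ^ 2) b q (k + 1) =
      (a / q ^ 2 - q * w / (a * b)) * (1 - b) * (1 - b * q) * (1 - w) * (1 - q ^ 2 * w) * q ^ 2 /
          ((1 - a * b / q) * (1 - a * b * q) * (1 - q ^ 2 * w / a) * (1 - q ^ 4 * w / a) *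
            (1 - q ^ 4 * w / b)) *
        Gw (q ^ 4 * w) a (b * q ^ 2) q k := by
  have hwa : q ^ 2 * w / (a / q ^ 2) = q ^ 4 * w / a := by field_simp
  have hab : a / q ^ 2 * b * q = a * b / q := by field_simp
  simp only [GwDen, hwa, hab, mul_ne_zero_iff] at hden hden'
  obtain ⟨⟨⟨hden_q, hden_wa⟩, -⟩, hden_abq⟩ := hden
  obtain ⟨⟨⟨-, hden_wa'⟩, -⟩, hden_ab⟩ := hden'
  rw [Gw_succ_eq_GwCommon_mul, Gw_div_sq_succ_eq_GwCommon_mul w a b k hq,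
    coeff_mul_Gw_eq_GwCommon_mul w a b k hq, ← mul_sub, contiguity_scalar_identity hq ha hb
    (one_sub_mul_pow_ne_zero_of_qPoch_succ_ne_zero hden_q)
    (one_sub_ne_zero_of_qPoch_succ_ne_zero hden_wa)
    (one_sub_mul_pow_ne_zero_of_qPoch_succ_ne_zero hden_abq)
    (one_sub_mul_pow_ne_zero_of_qPoch_succ_ne_zero hden_wa')
    (one_sub_ne_zero_of_qPoch_succ_ne_zero hden_ab)]

theorem andrews_termwise_relation_G_general (n k : ℕ) (hn : 2 ≤ n) (hk1 : 1 ≤ k)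
    (q a b : ℂ) (hq : q ≠ 0) (ha : a ≠ 0) (hb : b ≠ 0)
    (hd1 : GDen n a b q k ≠ 0)
    (hd2 : GDen n (a / q ^ 2) b q k ≠ 0) :
    Gterm n a b q k - Gterm n (a / q ^ 2) b q k =
      (a / q ^ 2 - q ^ (1 - 2 * (n : ℤ)) / (a * b)) * (1 - b) * (1 - b * q) *
          (1 - q ^ (-2 * (n : ℤ))) * (1 - q ^ (-2 * (n : ℤ) + 2)) * q ^ 2 /
        ((1 - a * b / q) * (1 - a * b * q) * (1 - q ^ (2 - 2 * (n : ℤ)) / a) *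
          (1 - q ^ (4 - 2 * (n : ℤ)) / a) * (1 - q ^ (4 - 2 * (n : ℤ)) / b)) *
        Gterm (n - 2) a (b * q ^ 2) q (k - 1) := by
  obtain ⟨k, rfl⟩ : ∃ k', k = k' + 1 := ⟨k - 1, by omega⟩
  obtain ⟨n, rfl⟩ : ∃ n', n = n' + 2 := ⟨n - 2, by omega⟩
  rw [GDen_eq_GwDen _ _ _ _ _ hq] at hd1 hd2
  have hw : q ^ (-2 * ((n : ℕ) : ℤ)) = q ^ 4 * q ^ (-2 * ((n + 2 : ℕ) : ℤ)) := by
    rw [← zpow_natCast, ← zpow_add₀ hq]; push_cast; ring_nf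
  simp only [Gterm_eq_Gw _ _ _ _ _ hq, Nat.add_sub_cancel, hw, zpow_sub_two_mul_natCast hq,
    show -2 * ((n + 2 : ℕ) : ℤ) + 2 = 2 - 2 * ((n + 2 : ℕ) : ℤ) by ring, zpow_ofNat, pow_one]
  exact Gw_sub_Gw_div_sq k hq ha hb hd1 hd2

/-- The termwise contiguous relation (3.5) used in the proof of equation (3.4):
`G_k(n,a,b,q) − G_k(n,a/q²,b,q) = βₙ G_{k−1}(n−2, a, bq², q)`. -/
theorem andrews_termwise_relation_G (n k : ℕ) (hn : 2 ≤ n) (hk1 : 1 ≤ k) (hk : k ≤ n)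
    (q a b : ℂ) (hq : q ≠ 0) (ha : a ≠ 0) (hb : b ≠ 0)
    (hd1 : GDen n a b q k ≠ 0)
    (hd2 : GDen n (a / q ^ 2) b q k ≠ 0)
    (hd3 : GDen (n - 2) a (b * q ^ 2) q (k - 1) ≠ 0)
    (hβ1 : 1 - a * b / q ≠ 0) (hβ2 : 1 - a * b * q ≠ 0)
    (hβ3 : 1 - q ^ (2 - 2 * (n : ℤ)) / a ≠ 0)
    (hβ4 : 1 - q ^ (4 - 2 * (n : ℤ)) / a ≠ 0)
    (hβ5 : 1 - q ^ (4 - 2 * (n : ℤ)) / b ≠ 0) :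
    Gterm n a b q k - Gterm n (a / q ^ 2) b q k =
      (a / q ^ 2 - q ^ (1 - 2 * (n : ℤ)) / (a * b)) * (1 - b) * (1 - b * q) *
          (1 - q ^ (-2 * (n : ℤ))) * (1 - q ^ (-2 * (n : ℤ) + 2)) * q ^ 2 /
        ((1 - a * b / q) * (1 - a * b * q) * (1 - q ^ (2 - 2 * (n : ℤ)) / a) *
          (1 - q ^ (4 - 2 * (n : ℤ)) / a) * (1 - q ^ (4 - 2 * (n : ℤ)) / b)) *
        Gterm (n - 2) a (b * q ^ 2) q (k - 1) :=
  andrews_termwise_relation_G_general n k hn hk1 q a b hq ha hb hd1 hd2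
end
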